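/- arXiv:2507.20167 — 2 statements merged into one kernel-verified Lean document; each statement's English description precedes it below -/
import Mathlib

section
/- For all integers a ≥ 1, b ≥ 0, every integer n ≥ 1 and every real x: T^{(a,b)}_{n,λ}(x+1) − T^{(a,b)}_{n,λ}(x) = n·T^{(a−1,b)}_{n−1,λ}(x). -/
/-!
Since `e_λ^(x+1) = e_λ^x · e_λ`, subtracting the defining identities at `x + 1` and `x` gives
`(F_{a,b,x+1} - F_{a,b,x}) (e_λ - 1)^a (e_λ + 1)^b = 2^b t^a e_λ^x (e_λ - 1)
  = t · F_{a-1,b,x} (e_λ - 1)^a (e_λ + 1)^b`,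
where `F_{a,b,x}` is the exponential generating function of `T^{(a,b)}_{·,λ}(x)`. The factor
`(e_λ - 1)^a (e_λ + 1)^b` is nonzero in the domain `ℝ⟦t⟧`, so `F_{a,b,x+1} - F_{a,b,x} = t F_{a-1,b,x}`;
comparing the coefficients of `t^n / n!` gives the recurrence.
-/

open Finset PowerSeries

noncomputable def dff (lam x : ℝ) (n : ℕ) : ℝ := ∏ i ∈ Finset.range n, (x - i * lam)

noncomputable def degExp (lam x : ℝ) : PowerSeries ℝ :=
  PowerSeries.mk fun k => dff lam x k / k.factorial

lemma descPochhammer_smeval_eq_prod_range (n : ℕ) (t : ℝ) :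
    (descPochhammer ℤ n).smeval t = ∏ i ∈ range n, (t - i) := by
  rw [← Polynomial.aeval_eq_smeval, Polynomial.aeval_def, Polynomial.eval₂_eq_eval_map,
    descPochhammer_map, descPochhammer_eval_eq_prod_range]

lemma dff_eq_pow_mul_descPochhammer {lam : ℝ} (hlam : lam ≠ 0) (x : ℝ) (n : ℕ) :
    dff lam x n = lam ^ n * (descPochhammer ℤ n).smeval (x / lam) := by
  have hpow : lam ^ n = ∏ _i ∈ range n, lam := by simp
  rw [dff, descPochhammer_smeval_eq_prod_range, hpow, ← prod_mul_distrib]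
  refine prod_congr rfl fun i _ => ?_
  field_simp

lemma dff_zero_left (x : ℝ) (n : ℕ) : dff 0 x n = x ^ n := by
  simp [dff]

lemma dff_add (lam x y : ℝ) (n : ℕ) :
    dff lam (x + y) n = ∑ ij ∈ antidiagonal n,
      (n.choose ij.1 : ℝ) * (dff lam x ij.1 * dff lam y ij.2) := by
  rcases eq_or_ne lam 0 with rfl | hlam
  · simp only [dff_zero_left, (Commute.all x y).add_pow', nsmul_eq_mul]
  rw [dff_eq_pow_mul_descPochhammer hlam, add_div,
    Ring.descPochhammer_smeval_add _ (Commute.all _ _), mul_sum]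
  refine sum_congr rfl fun ⟨i, j⟩ hij => ?_
  rw [HasAntidiagonal.mem_antidiagonal] at hij
  rw [dff_eq_pow_mul_descPochhammer hlam, dff_eq_pow_mul_descPochhammer hlam, ← hij, pow_add]
  ring

lemma coeff_degExp (lam x : ℝ) (n : ℕ) : coeff n (degExp lam x) = dff lam x n / n.factorial :=
  coeff_mk _ _

lemma degExp_add (lam x y : ℝ) : degExp lam (x + y) = degExp lam x * degExp lam y := by
  ext n
  rw [coeff_degExp, coeff_mul, dff_add, sum_div]
  refine sum_congr rfl fun ⟨i, j⟩ hij => ?_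
  rw [HasAntidiagonal.mem_antidiagonal] at hij
  subst hij
  have hfac : ((i + j).choose i : ℝ) * i.factorial * j.factorial = (i + j).factorial := by
    rw [Nat.choose_symm_add]
    exact_mod_cast Nat.add_choose_mul_factorial_mul_factorial i j
  have hchoose : ((i + j).choose i : ℝ) ≠ 0 :=
    Nat.cast_ne_zero.2 (Nat.choose_pos (Nat.le_add_right i j)).ne'
  rw [coeff_degExp, coeff_degExp, ← hfac]
  field_simp

lemma degExp_sub_one_ne_zero (lam : ℝ) {x : ℝ} (hx : x ≠ 0) : degExp lam x - 1 ≠ 0 := by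
  intro h
  apply hx
  simpa [coeff_degExp, dff] using congrArg (coeff 1) h

lemma degExp_add_one_ne_zero (lam x : ℝ) : degExp lam x + 1 ≠ 0 := by
  intro h
  have h0 := congrArg (coeff 0) h
  simp only [map_add, coeff_degExp, coeff_one, dff] at h0
  norm_num at h0

section Egf

variable {K : Type*} [Field K]

def egf (f : ℕ → K) : K⟦X⟧ :=
  mk fun n => f n / n.factorial

lemma egf_sub (f g : ℕ → K) : egf f - egf g = egf fun n => f n - g n := by
  ext n
  simp [egf, sub_div]

lemma apply_succ_of_egf_eq_X_mul [CharZero K] {f g : ℕ → K} (h : egf f = X * egf g) (n : ℕ) :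
    f (n + 1) = (n + 1) * g n := by
  have hn := congrArg (coeff (n + 1)) h
  rw [coeff_succ_X_mul, egf, egf, coeff_mk, coeff_mk, Nat.factorial_succ] at hn
  push_cast at hn
  rw [← div_div, div_left_inj' (Nat.cast_ne_zero.2 n.factorial_ne_zero),
    div_eq_iff n.cast_add_one_ne_zero] at hn
  linear_combination hn

end Egf

theorem stmt8_general (lam : ℝ)
    (T : ℕ → ℕ → ℝ → ℕ → ℝ)
    (hT : ∀ a b x, (PowerSeries.mk fun n => T a b x n / n.factorial)
          * (degExp lam 1 - 1) ^ a * (degExp lam 1 + 1) ^ b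
        = (2 : PowerSeries ℝ) ^ b * (PowerSeries.X : PowerSeries ℝ) ^ a * degExp lam x)
    (a b : ℕ) (ha : 1 ≤ a) (n : ℕ) (hn : 1 ≤ n) (x : ℝ) :
    T a b (x + 1) n - T a b x n = (n : ℝ) * T (a - 1) b x (n - 1) := by
  obtain ⟨a, rfl⟩ := Nat.exists_eq_add_of_le' ha
  obtain ⟨n, rfl⟩ := Nat.exists_eq_add_of_le' hn
  have hT' (a : ℕ) (x : ℝ) : egf (T a b x) * (degExp lam 1 - 1) ^ a * (degExp lam 1 + 1) ^ b
      = 2 ^ b * X ^ a * degExp lam x := hT a b x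
  have hgen : egf (fun k => T (a + 1) b (x + 1) k - T (a + 1) b x k) = X * egf (T a b x) := by
    refine mul_right_cancel₀ (mul_ne_zero (pow_ne_zero (a + 1)
      (degExp_sub_one_ne_zero lam one_ne_zero)) (pow_ne_zero b (degExp_add_one_ne_zero lam 1))) ?_
    rw [← egf_sub]
    linear_combination hT' (a + 1) (x + 1) - hT' (a + 1) x - X * (degExp lam 1 - 1) * hT' a x
      + 2 ^ b * X ^ (a + 1) * degExp_add lam x 1
  simpa using apply_succ_of_egf_eq_X_mul hgen n

theorem stmt8 (lam : ℝ) (hlam : lam ≠ 0)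
    (T : ℕ → ℕ → ℝ → ℕ → ℝ)
    (hT : ∀ a b x, (PowerSeries.mk fun n => T a b x n / n.factorial)
          * (degExp lam 1 - 1) ^ a * (degExp lam 1 + 1) ^ b
        = (2 : PowerSeries ℝ) ^ b * (PowerSeries.X : PowerSeries ℝ) ^ a * degExp lam x)
    (a b : ℕ) (ha : 1 ≤ a) (n : ℕ) (hn : 1 ≤ n) (x : ℝ) :
    T a b (x + 1) n - T a b x n = (n : ℝ) * T (a - 1) b x (n - 1) :=
  stmt8_general lam T hT a b ha n hn x
end

section
/- Let U(t) = Σ_{n≥0} (∫_0^1 (y)_{n,λ} dy) t^n/n! be the degenerate moment series of a uniform random variable on [0,1], and for an integer m ≥ 0 let S^{(m)}_{n,λ}(x) be defined by the formal power series identity (Σ_{n≥0} S^{(m)}_{n,λ}(x) t^n/n!)·U(t)^m = e_λ^x(t) (these are the degenerate Sheffer polynomials associated with the sum of m independent uniform [0,1] random variables). Then for every integer n ≥ 0 and every real x: S^{(m)}_{n,λ}(x) = Σ_{k=0}^{n} (C(n,k)/C(n−k+m,m))·λ^{n−k}·S₁(n−k+m,m)·β^{(m)}_{k,λ}(x). 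-/
open Finset PowerSeries

noncomputable def S1 : ℕ → ℕ → ℝ
  | 0, 0 => 1
  | 0, _ + 1 => 0
  | n + 1, 0 => -(n : ℝ) * S1 n 0
  | n + 1, k + 1 => S1 n k - (n : ℝ) * S1 n (k + 1)

/-!
A solution of `(1 + λX) F' = a F + b` in `ℝ⟦X⟧` is determined by its constant term, and `(1 + λX) d/dX` maps
`e_λ^y = (1 + λX)^(y/λ)` to `y e_λ^y` and `L = log (1 + λX)` to `λ`, which identifies
`L^m / m!` with `∑ S₁(n, m) λⁿ Xⁿ / n!` and gives `L e_λ^y = λ ∂_y e_λ^y`. Integrating the latter over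
`y ∈ [0, 1]` yields `L U = λ (e_λ - 1)`, so `(e_λ - 1)^m = Xᵐ (L / (λX))^m U^m`. Comparing the two
defining identities then gives `S^{(m)}(x) = β^{(m)}(x) · (L / (λX))^m`, whose coefficients are the
claimed sum.
-/

section DerivativeEquation

lemma derivative_C_mul {R : Type*} [CommSemiring R] (r : R) (F : R⟦X⟧) :
    d⁄dX R (C r * F) = C r * d⁄dX R F := by
  rw [Derivation.leibniz, derivative_C, smul_zero, add_zero, smul_eq_mul]

variable {R : Type*} [CommRing R]

lemma coeff_one_add_C_mul_X_mul_derivative (c : R) (F : R⟦X⟧) (n : ℕ) :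
    coeff n ((1 + C c * X) * d⁄dX R F) = (n + 1) * coeff (n + 1) F + c * (n * coeff n F) := by
  rw [add_mul, one_mul, mul_assoc, map_add, coeff_derivative, coeff_C_mul]
  cases n with
  | zero => simp [coeff_zero_X_mul]
  | succ k =>
    rw [coeff_succ_X_mul, coeff_derivative]
    push_cast
    ring

variable [IsDomain R] [CharZero R]

lemma eq_zero_of_one_add_C_mul_X_mul_derivative_eq {c : R} {a H : R⟦X⟧}
    (hH : (1 + C c * X) * d⁄dX R H = a * H) (h0 : constantCoeff H = 0) : H = 0 := by
  suffices h : ∀ n, coeff n H = 0 from ext fun n => by simpa using h n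
  intro n
  induction n using Nat.strong_induction_on with
  | _ n ih =>
    cases n with
    | zero => simpa using h0
    | succ n =>
      have hn := congrArg (coeff n) hH
      have hrhs : coeff n (a * H) = 0 := by
        rw [coeff_mul]
        refine Finset.sum_eq_zero fun p hp => ?_
        rw [ih p.2 (by have := mem_antidiagonal.1 hp; omega), mul_zero]
      rw [coeff_one_add_C_mul_X_mul_derivative, hrhs, ih n (by omega), mul_zero, mul_zero,
        add_zero] at hn
      have hn' : ((n + 1 : ℕ) : R) * coeff (n + 1) H = 0 := by exact_mod_cast hn
      simpa using (mul_eq_zero.1 hn').resolve_left (Nat.cast_ne_zero.2 n.succ_ne_zero)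

lemma eq_of_one_add_C_mul_X_mul_derivative_eq {c : R} {a b F G : R⟦X⟧}
    (hF : (1 + C c * X) * d⁄dX R F = a * F + b) (hG : (1 + C c * X) * d⁄dX R G = a * G + b)
    (h0 : constantCoeff F = constantCoeff G) : F = G := by
  refine sub_eq_zero.1 (eq_zero_of_one_add_C_mul_X_mul_derivative_eq (c := c) (a := a) ?_ ?_)
  · rw [map_sub, mul_sub, hF, hG]
    ring
  · rw [map_sub, h0, sub_self]

end DerivativeEquation

lemma S1_zero_right (n : ℕ) : S1 n 0 = if n = 0 then 1 else 0 := by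
  induction n with
  | zero => simp [S1]
  | succ k ih => simp [S1, ih]

lemma S1_eq_zero_of_lt : ∀ {n k : ℕ}, n < k → S1 n k = 0
  | 0, _ + 1, _ => rfl
  | n + 1, k + 1, h => by
    simp only [S1, S1_eq_zero_of_lt (Nat.lt_of_succ_lt_succ h),
      S1_eq_zero_of_lt (Nat.lt_of_succ_lt h), mul_zero, sub_zero]

lemma dff_succ (lam x : ℝ) (n : ℕ) : dff lam x (n + 1) = dff lam x n * (x - n * lam) :=
  prod_range_succ _ _

lemma dff_zero_left_s13 (lam : ℝ) (n : ℕ) : dff lam 0 n = if n = 0 then 1 else 0 := by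
  cases n with
  | zero => simp [dff]
  | succ k => exact if_neg k.succ_ne_zero ▸ prod_eq_zero (mem_range.2 k.succ_pos) (by simp)

lemma continuous_dff (lam : ℝ) (n : ℕ) : Continuous fun y => dff lam y n :=
  continuous_finsetProd _ fun _ _ => continuous_id.sub continuous_const

noncomputable def dffDeriv (lam y : ℝ) : ℕ → ℝ
  | 0 => 0
  | n + 1 => dffDeriv lam y n * (y - n * lam) + dff lam y n

lemma hasDerivAt_dff (lam y : ℝ) (n : ℕ) :
    HasDerivAt (fun z => dff lam z n) (dffDeriv lam y n) y := by
  induction n with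
  | zero => simpa [dff, dffDeriv] using hasDerivAt_const y (1 : ℝ)
  | succ k ih =>
    simp only [dff_succ]
    simpa [dffDeriv] using ih.fun_mul ((hasDerivAt_id y).sub_const (k * lam))

lemma continuous_dffDeriv (lam : ℝ) (n : ℕ) : Continuous fun y => dffDeriv lam y n := by
  induction n with
  | zero => exact continuous_const
  | succ k ih => exact (ih.mul (continuous_id.sub continuous_const)).add (continuous_dff lam k)

lemma integral_dffDeriv (lam : ℝ) (n : ℕ) :
    ∫ y in (0 : ℝ)..1, dffDeriv lam y n = dff lam 1 n - dff lam 0 n :=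
  intervalIntegral.integral_eq_sub_of_hasDerivAt (fun y _ => hasDerivAt_dff lam y n)
    ((continuous_dffDeriv lam n).intervalIntegrable 0 1)

lemma degExp_zero_right (lam : ℝ) : degExp lam 0 = 1 := by
  ext n
  rcases n.eq_zero_or_pos with rfl | hn
  · simp [degExp, dff]
  · simp [degExp, dff_zero_left_s13, coeff_one, hn.ne']

lemma degExp_ode (lam x : ℝ) :
    (1 + C lam * X) * d⁄dX ℝ (degExp lam x) = C x * degExp lam x := by
  ext n
  rw [coeff_one_add_C_mul_X_mul_derivative, coeff_C_mul]
  simp only [degExp, coeff_mk]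
  rw [dff_succ, Nat.factorial_succ]
  push_cast
  field_simp
  ring

/-- The power series `(log (1 + lam X)) ^ m / m!`. -/
noncomputable def logSeries (lam : ℝ) (m : ℕ) : ℝ⟦X⟧ :=
  mk fun n => S1 n m * lam ^ n / n.factorial

lemma logSeries_zero (lam : ℝ) : logSeries lam 0 = 1 := by
  ext n
  rw [logSeries, coeff_mk, S1_zero_right, coeff_one]
  split_ifs with h <;> simp [h]

lemma constantCoeff_logSeries_succ (lam : ℝ) (m : ℕ) :
    constantCoeff (logSeries lam (m + 1)) = 0 := by
  simp [logSeries, ← coeff_zero_eq_constantCoeff_apply, S1]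

lemma logSeries_succ_ode (lam : ℝ) (m : ℕ) :
    (1 + C lam * X) * d⁄dX ℝ (logSeries lam (m + 1)) = C lam * logSeries lam m := by
  ext n
  rw [coeff_one_add_C_mul_X_mul_derivative, coeff_C_mul]
  simp only [logSeries, coeff_mk]
  rw [show S1 (n + 1) (m + 1) = S1 n m - n * S1 n (m + 1) from rfl, Nat.factorial_succ]
  push_cast
  field_simp
  ring

lemma logSeries_one_ode (lam : ℝ) : (1 + C lam * X) * d⁄dX ℝ (logSeries lam 1) = C lam := by
  simpa [logSeries_zero] using logSeries_succ_ode lam 0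

lemma logSeries_one_pow (lam : ℝ) (m : ℕ) :
    logSeries lam 1 ^ m = C (m.factorial : ℝ) * logSeries lam m := by
  induction m with
  | zero => simp [logSeries_zero]
  | succ m ih =>
    refine eq_of_one_add_C_mul_X_mul_derivative_eq (c := lam) (a := 0)
      (b := C ((m + 1).factorial * lam) * logSeries lam m) ?_ ?_ ?_
    · calc (1 + C lam * X) * d⁄dX ℝ (logSeries lam 1 ^ (m + 1))
          = (m + 1 : ℝ⟦X⟧) * logSeries lam 1 ^ m * ((1 + C lam * X) * d⁄dX ℝ (logSeries lam 1)) := by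
            rw [derivative_pow, Nat.add_sub_cancel]
            push_cast
            ring
        _ = _ := by
            rw [logSeries_one_ode, ih, Nat.factorial_succ]
            simp only [map_mul, Nat.cast_mul, Nat.cast_succ, map_add, map_natCast, map_one]
            ring
    · rw [derivative_C_mul, mul_left_comm, logSeries_succ_ode, map_mul]
      ring
    · simp [constantCoeff_logSeries_succ]

noncomputable def degExpDeriv (lam y : ℝ) : ℝ⟦X⟧ :=
  mk fun n => dffDeriv lam y n / n.factorial

lemma degExpDeriv_ode (lam y : ℝ) :
    (1 + C lam * X) * d⁄dX ℝ (degExpDeriv lam y) = C y * degExpDeriv lam y + degExp lam y := by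
  ext n
  rw [coeff_one_add_C_mul_X_mul_derivative, map_add, coeff_C_mul]
  simp only [degExpDeriv, degExp, coeff_mk]
  rw [show dffDeriv lam y (n + 1) = dffDeriv lam y n * (y - n * lam) + dff lam y n from rfl,
    Nat.factorial_succ]
  push_cast
  field_simp
  ring

lemma logSeries_one_mul_degExp (lam y : ℝ) :
    logSeries lam 1 * degExp lam y = C lam * degExpDeriv lam y := by
  refine eq_of_one_add_C_mul_X_mul_derivative_eq (c := lam) (a := C y)
    (b := C lam * degExp lam y) ?_ ?_ ?_
  · calc (1 + C lam * X) * d⁄dX ℝ (logSeries lam 1 * degExp lam y)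
        = logSeries lam 1 * ((1 + C lam * X) * d⁄dX ℝ (degExp lam y))
          + degExp lam y * ((1 + C lam * X) * d⁄dX ℝ (logSeries lam 1)) := by
          rw [Derivation.leibniz, smul_eq_mul, smul_eq_mul]
          ring
      _ = _ := by
          rw [degExp_ode, logSeries_one_ode]
          ring
  · rw [derivative_C_mul, mul_left_comm, degExpDeriv_ode]
    ring
  · rw [map_mul, map_mul, constantCoeff_logSeries_succ lam 0, constantCoeff_C, zero_mul,
      ← coeff_zero_eq_constantCoeff_apply, degExpDeriv, coeff_mk]
    simp [dffDeriv]

lemma coeff_mul_mk_intervalIntegral (F : ℝ⟦X⟧) (g : ℕ → ℝ → ℝ) {a b : ℝ}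
    (hg : ∀ k, IntervalIntegrable (g k) MeasureTheory.volume a b) (n : ℕ) :
    coeff n (F * mk fun k => ∫ y in a..b, g k y) = ∫ y in a..b, coeff n (F * mk fun k => g k y) := by
  simp only [coeff_mul, coeff_mk]
  rw [intervalIntegral.integral_finsetSum fun p _ => (hg p.2).const_mul _]
  simp_rw [intervalIntegral.integral_const_mul]

noncomputable def uniformSeries (lam : ℝ) : ℝ⟦X⟧ :=
  mk fun n => (∫ y in (0 : ℝ)..1, dff lam y n) / n.factorial

lemma logSeries_one_mul_uniformSeries (lam : ℝ) :
    logSeries lam 1 * uniformSeries lam = C lam * (degExp lam 1 - 1) := by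
  have hU : uniformSeries lam = mk fun k => ∫ y in (0 : ℝ)..1, dff lam y k / k.factorial := by
    simp only [uniformSeries, intervalIntegral.integral_div]
  ext n
  rw [hU, coeff_mul_mk_intervalIntegral _ _
    fun k => ((continuous_dff lam k).div_const _).intervalIntegrable 0 1]
  change ∫ y in (0 : ℝ)..1, coeff n (logSeries lam 1 * degExp lam y) = _
  simp_rw [logSeries_one_mul_degExp, coeff_C_mul, degExpDeriv, coeff_mk]
  rw [intervalIntegral.integral_const_mul, intervalIntegral.integral_div, integral_dffDeriv,
    ← degExp_zero_right lam]
  simp only [map_sub, degExp, coeff_mk, sub_div]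

/-- The power series `(log (1 + lam X) / (lam X)) ^ m`. -/
noncomputable def logQuotSeries (lam : ℝ) (m : ℕ) : ℝ⟦X⟧ :=
  mk fun j => lam ^ j * S1 (j + m) m / ((j + m).choose m * j.factorial)

lemma C_pow_mul_X_pow_mul_logQuotSeries (lam : ℝ) (m : ℕ) :
    C lam ^ m * (X ^ m * logQuotSeries lam m) = C (m.factorial : ℝ) * logSeries lam m := by
  ext n
  rw [← map_pow, coeff_C_mul, coeff_C_mul, coeff_X_pow_mul']
  simp only [logQuotSeries, logSeries, coeff_mk]
  split_ifs with hmn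
  · obtain ⟨j, rfl⟩ := Nat.exists_eq_add_of_le' hmn
    rw [Nat.add_sub_cancel, Nat.cast_choose ℝ hmn, Nat.add_sub_cancel, pow_add]
    field_simp
  · simp [S1_eq_zero_of_lt (not_le.1 hmn)]

lemma X_pow_mul_logQuotSeries_mul_uniformSeries_pow {lam : ℝ} (hlam : lam ≠ 0) (m : ℕ) :
    X ^ m * logQuotSeries lam m * uniformSeries lam ^ m = (degExp lam 1 - 1) ^ m := by
  refine mul_left_cancel₀ (pow_ne_zero m ((map_ne_zero_iff C C_injective).2 hlam)) ?_
  calc C lam ^ m * (X ^ m * logQuotSeries lam m * uniformSeries lam ^ m)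
      = (logSeries lam 1 * uniformSeries lam) ^ m := by
        rw [← mul_assoc, C_pow_mul_X_pow_mul_logQuotSeries, mul_pow, logSeries_one_pow]
    _ = C lam ^ m * (degExp lam 1 - 1) ^ m := by
        rw [logSeries_one_mul_uniformSeries, mul_pow]

lemma coeff_mk_mul_logQuotSeries (lam : ℝ) (m n : ℕ) (b : ℕ → ℝ) :
    coeff n ((mk fun k => b k / k.factorial) * logQuotSeries lam m)
      = (∑ k ∈ range (n + 1), ((n.choose k : ℝ) / ((n - k + m).choose m : ℝ)) * lam ^ (n - k)
          * S1 (n - k + m) m * b k) / n.factorial := by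
  rw [coeff_mul, Nat.sum_antidiagonal_eq_sum_range_succ_mk, sum_div]
  refine sum_congr rfl fun k hk => ?_
  have hkn : k ≤ n := Nat.lt_succ_iff.1 (mem_range.1 hk)
  have hchoose : ((n - k + m).choose m : ℝ) ≠ 0 := Nat.cast_ne_zero.2 (Nat.choose_pos (by omega)).ne'
  simp only [coeff_mk, logQuotSeries]
  rw [Nat.cast_choose ℝ hkn]
  field_simp

theorem stmt13 (lam : ℝ) (hlam : lam ≠ 0)
    (B : ℕ → ℝ → ℕ → ℝ)
    (hB : ∀ m x, (PowerSeries.mk fun n => B m x n / n.factorial) * (degExp lam 1 - 1) ^ m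
        = (PowerSeries.X : PowerSeries ℝ) ^ m * degExp lam x)
    (S : ℕ → ℝ → ℕ → ℝ)
    (hS : ∀ m x, (PowerSeries.mk fun n => S m x n / n.factorial) *
        (PowerSeries.mk fun n => (∫ y in (0:ℝ)..1, dff lam y n) / n.factorial) ^ m
          = degExp lam x)
    (m n : ℕ) (x : ℝ) :
    S m x n = ∑ k ∈ Finset.range (n + 1),
      ((n.choose k : ℝ) / ((n - k + m).choose m : ℝ)) * lam ^ (n - k)
        * S1 (n - k + m) m * B m x k := by
  have hU : uniformSeries lam ≠ 0 := fun h => by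
    simpa [uniformSeries, dff] using congrArg (coeff 0) h
  have hSB : (mk fun n => S m x n / n.factorial)
      = (mk fun n => B m x n / n.factorial) * logQuotSeries lam m := by
    refine mul_right_cancel₀ (mul_ne_zero (pow_ne_zero m X_ne_zero) (pow_ne_zero m hU)) ?_
    calc (mk fun n => S m x n / n.factorial) * (X ^ m * uniformSeries lam ^ m)
        = X ^ m * degExp lam x := by rw [← hS m x, uniformSeries]; ring
      _ = (mk fun n => B m x n / n.factorial) * (X ^ m * logQuotSeries lam m * uniformSeries lam ^ m) := by
        rw [X_pow_mul_logQuotSeries_mul_uniformSeries_pow hlam, hB]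
      _ = _ := by ring
  have hcoeff := congrArg (coeff n) hSB
  rw [coeff_mk, coeff_mk_mul_logQuotSeries] at hcoeff
  exact (div_left_inj' (Nat.cast_ne_zero.2 n.factorial_ne_zero)).1 hcoeff
end
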